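/- Let p = (p_1, …, p_m) and q = (q_1, …, q_m) (m ≥ 2) be sequences that are permutations of (1, …, m) with suffixop(p) = prefixop(q) and p_1 < q_m. Define r = (r_1, …, r_{m+1}) by r_1 = p_1 and, for 1 ≤ i ≤ m, r_{i+1} = q_i if q_i < p_1 and r_{i+1} = q_i + 1 otherwise (so in particular r_{m+1} = q_m + 1). Then r is a permutation of (1, …, m+1) satisfying prefixop(r) = p and suffixop(r) = q. (Correctness of pattern fusion, Case 2 with p_1 < q_m.) -/
import Mathlib

/-- The rank of the `i`-th entry of a finite sequence `a`:
`rank_a(a_i) = 1 + |{j : a_j < a_i}|`. -/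
noncomputable def rankOf {α : Type*} [LinearOrder α] {m : ℕ} (a : Fin m → α) (i : Fin m) : ℕ :=
  1 + (Finset.univ.filter fun j => a j < a i).card

/-- The relative order `R(a) = (rank_a(a_1), …, rank_a(a_m))`. -/
noncomputable def relOrder {α : Type*} [LinearOrder α] {m : ℕ} (a : Fin m → α) : Fin m → ℕ :=
  fun i => rankOf a i

section FusionAux

open Finset

lemma filter_card_image {n : ℕ} (a : Fin n → ℕ) (ha : Function.Injective a) (c : ℕ) :
    (univ.filter fun j => a j < c).card = ((univ.image a).filter (· < c)).card := by
  rw [Finset.filter_image, Finset.card_image_of_injective _ ha]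

lemma rank_eq_self {n : ℕ} (a : Fin n → ℕ) (ha : Function.Injective a)
    (himg : univ.image a = Finset.Icc 1 n) (k : Fin n) : rankOf a k = a k := by
  have hmem : a k ∈ Finset.Icc 1 n := by
    rw [← himg]; exact mem_image_of_mem a (mem_univ k)
  simp only [Finset.mem_Icc] at hmem
  rw [rankOf, filter_card_image a ha (a k), himg]
  have h2 : (Finset.Icc 1 n).filter (· < a k) = Finset.Ico 1 (a k) := by
    ext x; simp only [mem_filter, Finset.mem_Icc, Finset.mem_Ico]; omega
  rw [h2, Nat.card_Ico]; omega

lemma rank_lt_c_iff {n M v c : ℕ} (a : Fin n → ℕ) (ha : Function.Injective a)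
    (himg : univ.image a = Finset.Icc 1 M \ {v}) (hc1 : 1 ≤ c) (hcv : c ≤ v) (k : Fin n)
    (hcM : c ≤ M) :
    a k < c ↔ rankOf a k < c := by
  have hmem : a k ∈ Finset.Icc 1 M \ {v} := by
    rw [← himg]; exact mem_image_of_mem a (mem_univ k)
  simp only [Finset.mem_sdiff, Finset.mem_Icc, Finset.mem_singleton] at hmem
  rw [rankOf, filter_card_image a ha (a k), himg]
  constructor
  · intro h
    have h2 : (Finset.Icc 1 M \ {v}).filter (· < a k) = Finset.Ico 1 (a k) := by
      ext x
      simp only [mem_filter, Finset.mem_sdiff, Finset.mem_Icc, Finset.mem_singleton,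
        Finset.mem_Ico]
      omega
    rw [h2, Nat.card_Ico]; omega
  · intro h
    by_contra hc
    push_neg at hc
    have hsub : Finset.Ico 1 c ⊆ (Finset.Icc 1 M \ {v}).filter (· < a k) := by
      intro x hx
      simp only [Finset.mem_Ico] at hx
      simp only [mem_filter, Finset.mem_sdiff, Finset.mem_Icc, Finset.mem_singleton]
      omega
    have := Finset.card_le_card hsub
    rw [Nat.card_Ico] at this
    omega

lemma rank_lt_rank_iff {n : ℕ} (a : Fin n → ℕ) (ha : Function.Injective a) (i j : Fin n) :
    a i < a j ↔ rankOf a i < rankOf a j := by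
  have key : ∀ i j : Fin n, a i < a j → rankOf a i < rankOf a j := by
    intro i j h
    rw [rankOf, rankOf]
    have hss : (univ.filter fun k => a k < a i) ⊂ (univ.filter fun k => a k < a j) := by
      constructor
      · intro k hk
        simp only [mem_filter, mem_univ, true_and] at *
        omega
      · intro hsub
        have hmem : i ∈ univ.filter fun k => a k < a j := by simp [h]
        have := hsub hmem
        simp at this
    have := Finset.card_lt_card hss
    omega
  constructor
  · exact key i j
  · intro h
    by_contra hc
    push_neg at hc
    rcases lt_or_eq_of_le hc with h2 | h2
    · have := key j i h2; omega
    · have : j = i := ha h2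
      subst this; omega

lemma relOrder_congr {n : ℕ} (a b : Fin n → ℕ) (h : ∀ i j, a i < a j ↔ b i < b j) :
    relOrder a = relOrder b := by
  funext i
  simp only [relOrder, rankOf]
  have : (univ.filter fun j => a j < a i) = (univ.filter fun j => b j < b i) :=
    Finset.filter_congr fun j _ => by simp [h]
  rw [this]

lemma bij_image {m : ℕ} (p : Fin m → ℕ) (hp : Set.BijOn p Set.univ (Set.Icc 1 m)) :
    Finset.univ.image p = Finset.Icc 1 m := by
  ext x
  simp only [Finset.mem_image, Finset.mem_univ, true_and, Finset.mem_Icc]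
  constructor
  · rintro ⟨j, rfl⟩
    exact Set.mem_Icc.mp (hp.mapsTo (Set.mem_univ j))
  · intro hx
    obtain ⟨j, -, rfl⟩ := hp.surjOn (Set.mem_Icc.mpr hx)
    exact ⟨j, rfl⟩

lemma suffix_image {m : ℕ} (hm : 1 ≤ m) (p : Fin m → ℕ)
    (hp : Set.BijOn p Set.univ (Set.Icc 1 m)) :
    Finset.univ.image (fun i : Fin (m - 1) => p ⟨i.val + 1, by have := i.isLt; omega⟩) =
      Finset.Icc 1 m \ {p ⟨0, by omega⟩} := by
  have hpinj : Function.Injective p := fun x y h => hp.injOn (Set.mem_univ x) (Set.mem_univ y) h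
  ext x
  simp only [Finset.mem_image, Finset.mem_univ, true_and, Finset.mem_sdiff, Finset.mem_Icc,
    Finset.mem_singleton]
  constructor
  · rintro ⟨k, rfl⟩
    refine ⟨Set.mem_Icc.mp (hp.mapsTo (Set.mem_univ _)), ?_⟩
    intro h
    have h2 := hpinj h
    have h3 : k.val + 1 = 0 := congrArg Fin.val h2
    omega
  · rintro ⟨hx, hne⟩
    obtain ⟨j, -, rfl⟩ := hp.surjOn (Set.mem_Icc.mpr hx)
    have hj : j.val ≠ 0 := by
      intro h
      exact hne (congrArg p (Fin.ext h))
    refine ⟨⟨j.val - 1, by have := j.isLt; omega⟩, ?_⟩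
    exact congrArg p (Fin.ext (by simp; omega))

lemma prefix_image {m : ℕ} (hm : 1 ≤ m) (q : Fin m → ℕ)
    (hq : Set.BijOn q Set.univ (Set.Icc 1 m)) :
    Finset.univ.image (fun i : Fin (m - 1) => q ⟨i.val, by have := i.isLt; omega⟩) =
      Finset.Icc 1 m \ {q ⟨m - 1, by omega⟩} := by
  have hqinj : Function.Injective q := fun x y h => hq.injOn (Set.mem_univ x) (Set.mem_univ y) h
  ext x
  simp only [Finset.mem_image, Finset.mem_univ, true_and, Finset.mem_sdiff, Finset.mem_Icc,
    Finset.mem_singleton]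
  constructor
  · rintro ⟨k, rfl⟩
    refine ⟨Set.mem_Icc.mp (hq.mapsTo (Set.mem_univ _)), ?_⟩
    intro h
    have h2 := hqinj h
    have h3 : k.val = m - 1 := congrArg Fin.val h2
    have := k.isLt
    omega
  · rintro ⟨hx, hne⟩
    obtain ⟨j, -, rfl⟩ := hq.surjOn (Set.mem_Icc.mpr hx)
    have hj : j.val ≠ m - 1 := by
      intro h
      exact hne (congrArg q (Fin.ext h))
    refine ⟨⟨j.val, by have := j.isLt; omega⟩, ?_⟩
    exact congrArg q (Fin.ext (by simp))

lemma monoRel {n : ℕ} (a b : Fin n → ℕ) (hb : Function.Injective b)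
    (h : ∀ i j, b i < b j → a i < a j) : ∀ i j, a i < a j ↔ b i < b j := by
  intro i j
  constructor
  · intro hij
    by_contra hc
    push_neg at hc
    rcases lt_or_eq_of_le hc with h2 | h2
    · have := h _ _ h2; omega
    · have : j = i := hb h2
      subst this; omega
  · exact h i j

end FusionAux


set_option maxHeartbeats 4000000

/-- Correctness of pattern fusion, Case 2 with `p_1 < q_m`.  If `p, q` are
permutations of `(1, …, m)` (`m ≥ 2`) with `suffixop(p) = prefixop(q)` and
`p_1 < q_m`, and `r = (r_1, …, r_{m+1})` is defined by `r_1 = p_1` and, for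
`1 ≤ i ≤ m`, `r_{i+1} = q_i` if `q_i < p_1` and `r_{i+1} = q_i + 1` otherwise,
then `r` is a permutation of `(1, …, m+1)` with `prefixop(r) = p` and
`suffixop(r) = q`. -/
theorem fusion_case2_correct {m : ℕ} (hm : 2 ≤ m) (p q : Fin m → ℕ)
    (hp : Set.BijOn p Set.univ (Set.Icc 1 m))
    (hq : Set.BijOn q Set.univ (Set.Icc 1 m))
    (hfuse : relOrder (fun i : Fin (m - 1) => p ⟨i.val + 1, by have := i.isLt; omega⟩) =
      relOrder (fun i : Fin (m - 1) => q ⟨i.val, by have := i.isLt; omega⟩))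
    (hlt : p ⟨0, by omega⟩ < q ⟨m - 1, by omega⟩)
    (r : Fin (m + 1) → ℕ)
    (hr0 : r ⟨0, by omega⟩ = p ⟨0, by omega⟩)
    (hri : ∀ i : Fin m, r ⟨i.val + 1, by have := i.isLt; omega⟩ =
      if q i < p ⟨0, by omega⟩ then q i else q i + 1) :
    Set.BijOn r Set.univ (Set.Icc 1 (m + 1)) ∧
    relOrder (fun i : Fin m => r ⟨i.val, by have := i.isLt; omega⟩) = p ∧
    relOrder (fun i : Fin m => r ⟨i.val + 1, by have := i.isLt; omega⟩) = q := by
  have h1m : 1 ≤ m := by omega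
  have hpinj : Function.Injective p := fun x y h => hp.injOn (Set.mem_univ x) (Set.mem_univ y) h
  have hqinj : Function.Injective q := fun x y h => hq.injOn (Set.mem_univ x) (Set.mem_univ y) h
  have hpmem : ∀ i, 1 ≤ p i ∧ p i ≤ m := fun i => Set.mem_Icc.mp (hp.mapsTo (Set.mem_univ i))
  have hqmem : ∀ i, 1 ≤ q i ∧ q i ≤ m := fun i => Set.mem_Icc.mp (hq.mapsTo (Set.mem_univ i))
  have hm0 : (0:ℕ) < m := by omega
  let p0 : ℕ := p ⟨0, hm0⟩
  have hp0def : p0 = p ⟨0, hm0⟩ := rfl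
  have hp01 : 1 ≤ p0 := (hpmem _).1
  have hp0m : p0 ≤ m := (hpmem _).2
  -- injectivity of the suffix/prefix sequences
  have hAinj : Function.Injective
      (fun i : Fin (m - 1) => p ⟨i.val + 1, by have := i.isLt; omega⟩) := by
    intro x y h
    have h2 : x.val + 1 = y.val + 1 := congrArg Fin.val (hpinj h)
    exact Fin.ext (by omega)
  have hBinj : Function.Injective
      (fun i : Fin (m - 1) => q ⟨i.val, by have := i.isLt; omega⟩) := by
    intro x y h
    have h2 := hqinj h
    have h3 := congrArg Fin.val h2
    simp only at h3
    exact Fin.ext h3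
  have himgA := suffix_image h1m p hp
  have himgB := prefix_image h1m q hq
  -- ranks agree
  have hrankAB : ∀ k : Fin (m - 1),
      rankOf (fun i : Fin (m - 1) => p ⟨i.val + 1, by have := i.isLt; omega⟩) k =
      rankOf (fun i : Fin (m - 1) => q ⟨i.val, by have := i.isLt; omega⟩) k :=
    fun k => congrFun hfuse k
  -- key equivalence: q_k < p0 ↔ p_{k+1} < p0
  have hE : ∀ k : Fin (m - 1),
      (q ⟨k.val, by have := k.isLt; omega⟩ < p0 ↔ p ⟨k.val + 1, by have := k.isLt; omega⟩ < p0) := by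
    intro k
    have hA := rank_lt_c_iff _ hAinj himgA hp01 le_rfl k hp0m
    have hB := rank_lt_c_iff _ hBinj himgB hp01 (le_of_lt hlt) k hp0m
    have hmid := congrArg (fun x => x < p0) (hrankAB k)
    exact hB.trans ((Iff.of_eq hmid).symm.trans hA.symm)
  -- relative orders agree between suffix of p and prefix of q
  have hOrd : ∀ k l : Fin (m - 1),
      (q ⟨k.val, by have := k.isLt; omega⟩ < q ⟨l.val, by have := l.isLt; omega⟩ ↔
        p ⟨k.val + 1, by have := k.isLt; omega⟩ < p ⟨l.val + 1, by have := l.isLt; omega⟩) := by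
    intro k l
    have hA := rank_lt_rank_iff _ hAinj k l
    have hB := rank_lt_rank_iff _ hBinj k l
    have hmid := congrArg₂ (fun x y => x < y) (hrankAB k) (hrankAB l)
    exact hB.trans ((Iff.of_eq hmid).symm.trans hA.symm)
  -- transfer to indices of Fin m
  have hEm : ∀ j : Fin m, 1 ≤ j.val →
      (q ⟨j.val - 1, by have := j.isLt; omega⟩ < p0 ↔ p j < p0) := by
    intro j hj
    have hk : j.val - 1 < m - 1 := by have := j.isLt; omega
    have h := hE ⟨j.val - 1, hk⟩
    have hidx : (⟨(j.val - 1) + 1, by have := j.isLt; omega⟩ : Fin m) = j :=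
      Fin.ext (show j.val - 1 + 1 = j.val by omega)
    exact h.trans (Iff.of_eq (congrArg (fun x => x < p0) (congrArg p hidx)))
  have hOrdm : ∀ i j : Fin m, 1 ≤ i.val → 1 ≤ j.val →
      (q ⟨i.val - 1, by have := i.isLt; omega⟩ < q ⟨j.val - 1, by have := j.isLt; omega⟩ ↔
        p i < p j) := by
    intro i j hi hj
    have hki : i.val - 1 < m - 1 := by have := i.isLt; omega
    have hkj : j.val - 1 < m - 1 := by have := j.isLt; omega
    have h := hOrd ⟨i.val - 1, hki⟩ ⟨j.val - 1, hkj⟩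
    have hidxi : (⟨(i.val - 1) + 1, by have := i.isLt; omega⟩ : Fin m) = i :=
      Fin.ext (show i.val - 1 + 1 = i.val by omega)
    have hidxj : (⟨(j.val - 1) + 1, by have := j.isLt; omega⟩ : Fin m) = j :=
      Fin.ext (show j.val - 1 + 1 = j.val by omega)
    exact h.trans (Iff.of_eq (congrArg₂ (fun x y => x < y) (congrArg p hidxi) (congrArg p hidxj)))
  -- values of r
  have hrzero : ∀ i : Fin m, i.val = 0 → r ⟨i.val, by have := i.isLt; omega⟩ = p0 := by
    intro i hi
    have hidx : (⟨i.val, by have := i.isLt; omega⟩ : Fin (m + 1)) = ⟨0, by omega⟩ :=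
      Fin.ext hi
    exact (congrArg r hidx).trans hr0
  have hrpos : ∀ i : Fin m, 1 ≤ i.val → r ⟨i.val, by have := i.isLt; omega⟩ =
      if q ⟨i.val - 1, by have := i.isLt; omega⟩ < p0
      then q ⟨i.val - 1, by have := i.isLt; omega⟩
      else q ⟨i.val - 1, by have := i.isLt; omega⟩ + 1 := by
    intro i hi
    have hidx : (⟨i.val, by have := i.isLt; omega⟩ : Fin (m + 1)) =
        ⟨(i.val - 1) + 1, by have := i.isLt; omega⟩ :=
      Fin.ext (show i.val = i.val - 1 + 1 by omega)
    exact (congrArg r hidx).trans (hri ⟨i.val - 1, by have := i.isLt; omega⟩)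
  have hpi0 : ∀ i : Fin m, i.val = 0 → p i = p0 := fun i hi => congrArg p (Fin.ext hi)
  have hpine : ∀ i : Fin m, 1 ≤ i.val → p i ≠ p0 := by
    intro i hi h
    have h2 : i.val = 0 := congrArg Fin.val (hpinj h)
    omega
  -- monotonicity of the prefix of r relative to p
  have hmonoPre : ∀ i j : Fin m, p i < p j →
      r ⟨i.val, by have := i.isLt; omega⟩ < r ⟨j.val, by have := j.isLt; omega⟩ := by
    intro i j hpij
    rcases Nat.eq_zero_or_pos i.val with hi | hi
    · rcases Nat.eq_zero_or_pos j.val with hj | hj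
      · have : i = j := Fin.ext (by omega)
        subst this; omega
      · have e1 := hrzero i hi
        have hpij' : p0 < p j := by rw [hpi0 i hi] at hpij; exact hpij
        have h2 : ¬ q ⟨j.val - 1, by have := j.isLt; omega⟩ < p0 := by
          intro hc
          have := (hEm j hj).mp hc
          omega
        have e2 := (hrpos j hj).trans (if_neg h2)
        omega
    · rcases Nat.eq_zero_or_pos j.val with hj | hj
      · have e1 := hrzero j hj
        have hpij' : p i < p0 := by rw [hpi0 j hj] at hpij; exact hpij
        have h2 : q ⟨i.val - 1, by have := i.isLt; omega⟩ < p0 := (hEm i hi).mpr hpij'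
        have e2 := (hrpos i hi).trans (if_pos h2)
        omega
      · have h2 : q ⟨i.val - 1, by have := i.isLt; omega⟩ <
            q ⟨j.val - 1, by have := j.isLt; omega⟩ := (hOrdm i j hi hj).mpr hpij
        have e1 := hrpos i hi
        have e2 := hrpos j hj
        by_cases c1 : q ⟨i.val - 1, by have := i.isLt; omega⟩ < p0 <;>
          by_cases c2 : q ⟨j.val - 1, by have := j.isLt; omega⟩ < p0
        · have f1 := e1.trans (if_pos c1); have f2 := e2.trans (if_pos c2); omega
        · have f1 := e1.trans (if_pos c1); have f2 := e2.trans (if_neg c2); omega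
        · have f1 := e1.trans (if_neg c1); have f2 := e2.trans (if_pos c2); omega
        · have f1 := e1.trans (if_neg c1); have f2 := e2.trans (if_neg c2); omega
  -- monotonicity of the suffix of r relative to q
  have hmonoSuf : ∀ i j : Fin m, q i < q j →
      r ⟨i.val + 1, by have := i.isLt; omega⟩ < r ⟨j.val + 1, by have := j.isLt; omega⟩ := by
    intro i j hqij
    have e1 := hri i
    have e2 := hri j
    by_cases c1 : q i < p ⟨0, hm0⟩ <;> by_cases c2 : q j < p ⟨0, hm0⟩
    · have f1 := e1.trans (if_pos c1); have f2 := e2.trans (if_pos c2); omega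
    · have f1 := e1.trans (if_pos c1); have f2 := e2.trans (if_neg c2); omega
    · have f1 := e1.trans (if_neg c1); have f2 := e2.trans (if_pos c2); omega
    · have f1 := e1.trans (if_neg c1); have f2 := e2.trans (if_neg c2); omega
  have himgp := bij_image p hp
  have himgq := bij_image q hq
  refine ⟨⟨?_, ?_, ?_⟩, ?_, ?_⟩
  · -- MapsTo
    intro x _
    rcases Nat.eq_zero_or_pos x.val with hx | hx
    · have hidx : x = ⟨0, by omega⟩ := Fin.ext hx
      have e := (congrArg r hidx).trans hr0
      exact Set.mem_Icc.mpr ⟨by omega, by omega⟩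
    · have hxm : x.val - 1 < m := by have := x.isLt; omega
      have hidx : x = ⟨(x.val - 1) + 1, by have := x.isLt; omega⟩ :=
        Fin.ext (show x.val = x.val - 1 + 1 by omega)
      have e := (congrArg r hidx).trans (hri ⟨x.val - 1, hxm⟩)
      have hb := hqmem ⟨x.val - 1, hxm⟩
      by_cases c : q ⟨x.val - 1, hxm⟩ < p ⟨0, hm0⟩
      · have f := e.trans (if_pos c)
        exact Set.mem_Icc.mpr ⟨by omega, by omega⟩
      · have f := e.trans (if_neg c)
        exact Set.mem_Icc.mpr ⟨by omega, by omega⟩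
  · -- InjOn
    intro x _ y _ hxy
    have hne : ∀ i : Fin m, r ⟨i.val + 1, by have := i.isLt; omega⟩ ≠ p0 := by
      intro i h
      have e := (hri i).symm.trans h
      have hb := hqmem i
      split_ifs at e <;> omega
    rcases Nat.eq_zero_or_pos x.val with hx | hx <;> rcases Nat.eq_zero_or_pos y.val with hy | hy
    · exact Fin.ext (by omega)
    · exfalso
      have hidx : x = ⟨0, by omega⟩ := Fin.ext hx
      have hym : y.val - 1 < m := by have := y.isLt; omega
      have hidy : y = ⟨(y.val - 1) + 1, by have := y.isLt; omega⟩ :=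
        Fin.ext (show y.val = y.val - 1 + 1 by omega)
      have ex := (congrArg r hidx).trans hr0
      exact hne ⟨y.val - 1, hym⟩ (((congrArg r hidy).symm.trans hxy.symm).trans ex)
    · exfalso
      have hidy : y = ⟨0, by omega⟩ := Fin.ext hy
      have hxm : x.val - 1 < m := by have := x.isLt; omega
      have hidx : x = ⟨(x.val - 1) + 1, by have := x.isLt; omega⟩ :=
        Fin.ext (show x.val = x.val - 1 + 1 by omega)
      have ey := (congrArg r hidy).trans hr0
      exact hne ⟨x.val - 1, hxm⟩ (((congrArg r hidx).symm.trans hxy).trans ey)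
    · have hxm : x.val - 1 < m := by have := x.isLt; omega
      have hym : y.val - 1 < m := by have := y.isLt; omega
      have hidx : x = ⟨(x.val - 1) + 1, by have := x.isLt; omega⟩ :=
        Fin.ext (show x.val = x.val - 1 + 1 by omega)
      have hidy : y = ⟨(y.val - 1) + 1, by have := y.isLt; omega⟩ :=
        Fin.ext (show y.val = y.val - 1 + 1 by omega)
      have ex := (congrArg r hidx).symm.trans (hxy.trans (congrArg r hidy))
      have ex2 := ((hri ⟨x.val - 1, hxm⟩).symm.trans ex).trans (hri ⟨y.val - 1, hym⟩)
      have hqq : q ⟨x.val - 1, hxm⟩ = q ⟨y.val - 1, hym⟩ := by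
        split_ifs at ex2 <;> omega
      have h2 : x.val - 1 = y.val - 1 := congrArg Fin.val (hqinj hqq)
      exact Fin.ext (by omega)
  · -- SurjOn
    intro y hy
    simp only [Set.mem_Icc] at hy
    by_cases hyp : y = p0
    · exact ⟨⟨0, by omega⟩, Set.mem_univ _, hr0.trans hyp.symm⟩
    · by_cases hylt : y < p0
      · obtain ⟨i, -, hi⟩ := hq.surjOn (Set.mem_Icc.mpr ⟨hy.1, by omega⟩)
        refine ⟨⟨i.val + 1, by have := i.isLt; omega⟩, Set.mem_univ _, ?_⟩
        exact (hri i).trans ((if_pos (show q i < p ⟨0, hm0⟩ by omega)).trans hi)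
      · obtain ⟨i, -, hi⟩ := hq.surjOn (Set.mem_Icc.mpr (⟨by omega, by omega⟩ :
          1 ≤ y - 1 ∧ y - 1 ≤ m))
        refine ⟨⟨i.val + 1, by have := i.isLt; omega⟩, Set.mem_univ _, ?_⟩
        exact (hri i).trans ((if_neg (show ¬ q i < p ⟨0, hm0⟩ by omega)).trans (by omega))
  · -- prefix relOrder = p
    have h1 : relOrder (fun i : Fin m => r ⟨i.val, by have := i.isLt; omega⟩) = relOrder p :=
      relOrder_congr _ _ (monoRel _ p hpinj hmonoPre)
    exact h1.trans (funext fun i => rank_eq_self p hpinj himgp i)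
  · -- suffix relOrder = q
    have h1 : relOrder (fun i : Fin m => r ⟨i.val + 1, by have := i.isLt; omega⟩) = relOrder q :=
      relOrder_congr _ _ (monoRel _ q hqinj hmonoSuf)
    exact h1.trans (funext fun i => rank_eq_self q hqinj himgq i)
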